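/- The generating function Σ_{n≥0} u_2(n) t^n equals (1 - 2t)/(1 - 5t + 2t^2) as a formal power series, where u_2(n) = Σ_{k≥0} a(n,k)^2. -/

import Mathlib

/-!
For every polynomial `p`, the sum of the squares of its coefficients is the central coefficient of
the autocorrelation `p * mirror p`, which is symmetric about that centre. For `p = X * F n` the
centre is `2 ^ (n + 1)` and the autocorrelation vanishes outside `(0, 2 ^ (n + 2))`. Since
`1 + y + y²` is its own mirror, passing from `n` to `n + 1` multiplies the autocorrelation by
`(1 + y + y²)² = 1 + 2y + 3y² + 2y³ + y⁴` with `y = X ^ 2 ^ n`. Reading off the coefficients at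
the centre and at the quarter point `2 ^ n` (call them `u` and `w`) gives `u' = 3u + 4w` and
`w' = u + 2w`; eliminating `w` yields `u₂(n + 2) = 5 u₂(n + 1) - 2 u₂(n)`, with `u₂(0) = 1` and
`u₂(1) = 3`.
-/

open Polynomial

noncomputable def F (n : ℕ) : Polynomial ℤ :=
  ∏ i ∈ Finset.range n, (1 + Polynomial.X ^ (2 ^ i) + Polynomial.X ^ (2 ^ (i + 1)))

noncomputable def a (n : ℕ) (k : ℕ) : ℤ := (F n).coeff k

noncomputable def u2 (n : ℕ) : ℤ := ∑ᶠ k : ℕ, (a n k) ^ 2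

namespace Polynomial

section Semiring

variable {R : Type*} [Semiring R]

theorem finsum_coeff_sq_eq_coeff_mul_mirror (p : R[X]) :
    ∑ᶠ k, p.coeff k ^ 2 = (p * p.mirror).coeff (p.natDegree + p.natTrailingDegree) := by
  set d := p.natDegree + p.natTrailingDegree
  have hsupp : (Function.support fun k => p.coeff k ^ 2) ⊆ ↑(Finset.range (d + 1)) := by
    intro k hk
    have : k ≤ p.natDegree := le_natDegree_of_ne_zero fun h => hk (by simp [h])
    simp only [Finset.coe_range, Set.mem_Iio]
    omega
  rw [finsum_eq_sum_of_support_subset _ hsupp, coeff_mul,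
    Finset.Nat.sum_antidiagonal_eq_sum_range_succ_mk]
  refine Finset.sum_congr rfl fun k hk => ?_
  rw [coeff_mirror, revAt_le (Nat.sub_le d k), Nat.sub_sub_self (Finset.mem_range_succ_iff.mp hk),
    sq]

variable [NoZeroDivisors R]

theorem natDegree_add_natTrailingDegree_mul {p q : R[X]} (hp : p ≠ 0) (hq : q ≠ 0) :
    (p * q).natDegree + (p * q).natTrailingDegree =
      (p.natDegree + p.natTrailingDegree) + (q.natDegree + q.natTrailingDegree) := by
  rw [natDegree_mul hp hq, natTrailingDegree_mul hp hq]
  ring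

theorem coeff_mul_mirror_eq_zero_of_lt (p : R[X]) {i : ℕ}
    (hi : 2 * (p.natDegree + p.natTrailingDegree) < i) : (p * p.mirror).coeff i = 0 :=
  coeff_eq_zero_of_natDegree_lt (by rw [natDegree_mul_mirror]; omega)

end Semiring

section CommSemiring

variable {R : Type*} [CommSemiring R]

theorem coeff_mul_one_add_X_pow_add_X_pow_sq (p : R[X]) (s m : ℕ) :
    (p * (1 + X ^ s + X ^ (2 * s)) ^ 2).coeff (m + 4 * s) =
      p.coeff (m + 4 * s) + 2 * p.coeff (m + 3 * s) + 3 * p.coeff (m + 2 * s) +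
        2 * p.coeff (m + s) + p.coeff m := by
  have hexpand : p * (1 + X ^ s + X ^ (2 * s)) ^ 2 = p + 2 * (p * X ^ s) +
      3 * (p * X ^ (2 * s)) + 2 * (p * X ^ (3 * s)) + p * X ^ (4 * s) := by ring
  rw [hexpand]
  simp only [coeff_add, coeff_ofNat_mul]
  rw [show m + 4 * s = m + 3 * s + s by ring, coeff_mul_X_pow,
    show m + 3 * s + s = m + 2 * s + 2 * s by ring, coeff_mul_X_pow,
    show m + 2 * s + 2 * s = m + s + 3 * s by ring, coeff_mul_X_pow,
    show m + s + 3 * s = m + 4 * s by ring, coeff_mul_X_pow]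

variable [NoZeroDivisors R]

theorem coeff_mul_mirror_eq_of_add_eq (p : R[X]) {i j : ℕ}
    (hij : i + j = 2 * (p.natDegree + p.natTrailingDegree)) :
    (p * p.mirror).coeff i = (p * p.mirror).coeff j := by
  have hmirror : (p * p.mirror).mirror = p * p.mirror := by
    rw [mirror_mul_of_domain, mirror_mirror, mul_comm]
  rw [← hmirror, coeff_mirror, natDegree_mul_mirror, natTrailingDegree_mul_mirror, ← mul_add,
    revAt_le (by omega), hmirror]
  congr 1
  omega

end CommSemiring

section Trinomial

variable {R : Type*} [Semiring R]

theorem one_add_X_pow_add_X_pow_eq_trinomial (s : ℕ) :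
    (1 + X ^ s + X ^ (2 * s) : R[X]) = trinomial 0 s (2 * s) 1 1 1 := by
  simp [trinomial]

theorem monic_one_add_X_pow_add_X_pow {s : ℕ} (hs : 0 < s) :
    (1 + X ^ s + X ^ (2 * s) : R[X]).Monic := by
  rw [one_add_X_pow_add_X_pow_eq_trinomial]
  exact trinomial_monic hs (by omega)

variable [Nontrivial R]

theorem mirror_one_add_X_pow_add_X_pow {s : ℕ} (hs : 0 < s) :
    (1 + X ^ s + X ^ (2 * s) : R[X]).mirror = 1 + X ^ s + X ^ (2 * s) := by
  rw [one_add_X_pow_add_X_pow_eq_trinomial,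
    trinomial_mirror hs (by omega) one_ne_zero one_ne_zero, show 2 * s - s + 0 = s by omega]

theorem natDegree_add_natTrailingDegree_one_add_X_pow_add_X_pow {s : ℕ} (hs : 0 < s) :
    (1 + X ^ s + X ^ (2 * s) : R[X]).natDegree +
      (1 + X ^ s + X ^ (2 * s) : R[X]).natTrailingDegree = 2 * s := by
  rw [one_add_X_pow_add_X_pow_eq_trinomial, trinomial_natDegree hs (by omega) one_ne_zero,
    trinomial_natTrailingDegree hs (by omega) one_ne_zero, add_zero]

end Trinomial

end Polynomial

theorem PowerSeries.mk_mul_one_sub_C_mul_X_sub_C_mul_X_sq {R : Type*} [CommRing R]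
    (u : ℕ → R) (b c : R) (h : ∀ n, u (n + 2) = b * u (n + 1) + c * u n) :
    mk u * (1 - C b * X - C c * X ^ 2) = C (u 0) + C (u 1 - b * u 0) * X := by
  rw [show mk u * (1 - C b * X - C c * X ^ 2) = mk u - C b * (mk u * X) - C c * (mk u * X ^ 2) by
    ring]
  ext n
  rcases n with _ | _ | n
  · simp
  · simp [coeff_succ_mul_X, coeff_mul_X_pow']
  · simp [coeff_succ_mul_X, coeff_mul_X_pow', h]

theorem F_succ (n : ℕ) : F (n + 1) = F n * (1 + X ^ 2 ^ n + X ^ (2 * 2 ^ n)) := by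
  rw [F, Finset.prod_range_succ, ← F, pow_succ']

theorem monic_F (n : ℕ) : (F n).Monic :=
  monic_prod_of_monic _ _ fun i _ => by
    rw [pow_succ']
    exact monic_one_add_X_pow_add_X_pow (Nat.two_pow_pos i)

theorem natDegree_add_natTrailingDegree_X_mul_F (n : ℕ) :
    (X * F n).natDegree + (X * F n).natTrailingDegree = 2 * 2 ^ n := by
  induction n with
  | zero => simp [F]
  | succ n ih =>
    have hN := Nat.two_pow_pos n
    rw [F_succ, ← mul_assoc, natDegree_add_natTrailingDegree_mul
      (mul_ne_zero X_ne_zero (monic_F n).ne_zero) (monic_one_add_X_pow_add_X_pow hN).ne_zero,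
      ih, natDegree_add_natTrailingDegree_one_add_X_pow_add_X_pow hN, pow_succ]
    ring

/-- The factor `X` puts the centre of the coefficients of `X * F n` at `2 ^ n` rather than
`2 ^ n - 1`, so that no index below involves truncated subtraction. -/
noncomputable def autocorr (n : ℕ) : ℤ[X] := X * F n * (X * F n).mirror

theorem autocorr_succ (n : ℕ) :
    autocorr (n + 1) = autocorr n * (1 + X ^ 2 ^ n + X ^ (2 * 2 ^ n)) ^ 2 := by
  rw [autocorr, autocorr, F_succ, ← mul_assoc, mirror_mul_of_domain,
    mirror_one_add_X_pow_add_X_pow (Nat.two_pow_pos n)]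
  ring

theorem u2_eq_coeff_autocorr (n : ℕ) : u2 n = (autocorr n).coeff (2 * 2 ^ n) := by
  have hdeg : (F n).natDegree + (F n).natTrailingDegree + 2 = 2 * 2 ^ n := by
    rw [← natDegree_add_natTrailingDegree_X_mul_F n,
      natDegree_add_natTrailingDegree_mul X_ne_zero (monic_F n).ne_zero, natDegree_X,
      natTrailingDegree_X]
    ring
  show ∑ᶠ k, (F n).coeff k ^ 2 = _
  rw [finsum_coeff_sq_eq_coeff_mul_mirror, autocorr, mirror_mul_of_domain, mirror_X, ← hdeg,
    show X * F n * (X * (F n).mirror) = X ^ 2 * (F n * (F n).mirror) by ring, coeff_X_pow_mul]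

theorem autocorr_coeff_eq_of_add_eq (n : ℕ) {i j : ℕ} (hij : i + j = 4 * 2 ^ n) :
    (autocorr n).coeff i = (autocorr n).coeff j :=
  coeff_mul_mirror_eq_of_add_eq _ (by rw [natDegree_add_natTrailingDegree_X_mul_F]; omega)

theorem autocorr_coeff_eq_zero_of_lt (n : ℕ) {i : ℕ} (hi : 4 * 2 ^ n < i) :
    (autocorr n).coeff i = 0 :=
  coeff_mul_mirror_eq_zero_of_lt _ (by rw [natDegree_add_natTrailingDegree_X_mul_F]; omega)

theorem autocorr_coeff_zero (n : ℕ) : (autocorr n).coeff 0 = 0 := by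
  rw [autocorr, mul_assoc, coeff_X_mul_zero]

theorem autocorr_succ_coeff_center (n : ℕ) :
    (autocorr (n + 1)).coeff (2 * 2 ^ (n + 1)) =
      3 * (autocorr n).coeff (2 * 2 ^ n) + 4 * (autocorr n).coeff (2 ^ n) := by
  have hend : (autocorr n).coeff (4 * 2 ^ n) = 0 := by
    rw [autocorr_coeff_eq_of_add_eq n (j := 0) (by ring), autocorr_coeff_zero]
  have hsymm : (autocorr n).coeff (3 * 2 ^ n) = (autocorr n).coeff (2 ^ n) :=
    autocorr_coeff_eq_of_add_eq n (by ring)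
  rw [autocorr_succ, show 2 * 2 ^ (n + 1) = 0 + 4 * 2 ^ n by ring,
    coeff_mul_one_add_X_pow_add_X_pow_sq]
  simp only [zero_add, hend, hsymm, autocorr_coeff_zero]
  ring

theorem autocorr_succ_coeff_two_pow_succ (n : ℕ) :
    (autocorr (n + 1)).coeff (2 ^ (n + 1)) =
      (autocorr n).coeff (2 * 2 ^ n) + 2 * (autocorr n).coeff (2 ^ n) := by
  have hN := Nat.two_pow_pos n
  have hend : (autocorr n).coeff (2 * 2 ^ n + 2 * 2 ^ n) = 0 := by
    rw [autocorr_coeff_eq_of_add_eq n (j := 0) (by ring), autocorr_coeff_zero]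
  have hsymm : (autocorr n).coeff (2 * 2 ^ n + 2 ^ n) = (autocorr n).coeff (2 ^ n) :=
    autocorr_coeff_eq_of_add_eq n (by ring)
  -- Reflect to `6 * 2 ^ n`, an index of the form `m + 4 * 2 ^ n` that the expansion applies to.
  rw [autocorr_coeff_eq_of_add_eq (n + 1) (j := 2 * 2 ^ n + 4 * 2 ^ n) (by ring), autocorr_succ,
    coeff_mul_one_add_X_pow_add_X_pow_sq,
    autocorr_coeff_eq_zero_of_lt n (i := 2 * 2 ^ n + 4 * 2 ^ n) (by omega),
    autocorr_coeff_eq_zero_of_lt n (i := 2 * 2 ^ n + 3 * 2 ^ n) (by omega), hend, hsymm]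
  ring

theorem u2_add_two (n : ℕ) : u2 (n + 2) = 5 * u2 (n + 1) - 2 * u2 n := by
  simp only [u2_eq_coeff_autocorr]
  linear_combination autocorr_succ_coeff_center (n + 1) + 4 * autocorr_succ_coeff_two_pow_succ n -
    2 * autocorr_succ_coeff_center n

theorem u2_zero : u2 0 = 1 := by
  simp [u2_eq_coeff_autocorr, autocorr, F, mirror_X, ← sq, coeff_X_pow]

theorem u2_one : u2 1 = 3 := by
  have hW : (autocorr 0).coeff 1 = 0 := by simp [autocorr, F, mirror_X, ← sq, coeff_X_pow]
  rw [u2_eq_coeff_autocorr, autocorr_succ_coeff_center, ← u2_eq_coeff_autocorr, u2_zero,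
    pow_zero, hW]
  norm_num

/-- Σ_{n≥0} u₂(n) tⁿ = (1-2t)/(1-5t+2t²) as formal power series over ℚ,
stated with denominators cleared. -/
theorem u2_generating_function :
    (PowerSeries.mk fun n => (u2 n : ℚ)) *
      (1 - 5 * (PowerSeries.X : PowerSeries ℚ) + 2 * PowerSeries.X ^ 2) =
    1 - 2 * PowerSeries.X := by
  have hrec (n : ℕ) : (u2 (n + 2) : ℚ) = 5 * u2 (n + 1) + -2 * u2 n := by
    push_cast [u2_add_two]
    ring
  have h := PowerSeries.mk_mul_one_sub_C_mul_X_sub_C_mul_X_sq (fun n => (u2 n : ℚ)) 5 (-2) hrec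
  rw [u2_zero, u2_one] at h
  norm_num [map_ofNat] at h
  linear_combination h
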